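/- If μ is a fuzzy h-quasi-ideal of a Γ-hemiring S (with left and right unities), then μ⁺′ is a fuzzy h-quasi-ideal of the left operator hemiring L. -/

import Mathlib

open scoped Classical

/-- A `Γ`-hemiring structure on additive commutative monoids `S` and `Γ`. -/
structure GammaHemiring (S : Type) (Γ : Type) [AddCommMonoid S] [AddCommMonoid Γ] : Type where
  tri : S → Γ → S → S
  add_left : ∀ a b α c, tri (a + b) α c = tri a α c + tri b α c
  add_mid : ∀ a α β b, tri a (α + β) b = tri a α b + tri a β b
  add_right : ∀ a α b c, tri a α (b + c) = tri a α b + tri a α c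
  tri_assoc : ∀ a α b β c, tri a α (tri b β c) = tri (tri a α b) β c
  zero_left : ∀ α a, tri 0 α a = 0
  zero_right : ∀ a α, tri a α 0 = 0
  zero_mid : ∀ a b, tri a 0 b = 0

namespace GammaHemiring

variable {S Γ : Type} [AddCommMonoid S] [AddCommMonoid Γ] (H : GammaHemiring S Γ)

/-- Action of a formal sum `Σ (xᵢ, αᵢ)` on an element of `S`. -/
def lAct (u : Multiset (S × Γ)) (a : S) : S := (u.map fun p => H.tri p.1 p.2 a).sum

/-- The congruence `ρ` on the free additive commutative semigroup on `S × Γ`. -/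
def lSetoid : Setoid (Multiset (S × Γ)) where
  r u v := ∀ a, H.lAct u a = H.lAct v a
  iseqv := ⟨fun _ _ => rfl, fun h a => (h a).symm, fun h1 h2 a => (h1 a).trans (h2 a)⟩

/-- The left operator hemiring `L` of a `Γ`-hemiring `S`. -/
def LOp := Quotient H.lSetoid

/-- Multiplication of formal sums: `(Σ[xᵢ,αᵢ])(Σ[yⱼ,βⱼ]) = Σ[xᵢαᵢyⱼ, βⱼ]`. -/
def lMul (u v : Multiset (S × Γ)) : Multiset (S × Γ) :=
  u.bind fun p => v.map fun q => (H.tri p.1 p.2 q.1, q.2)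

lemma lAct_add (u v : Multiset (S × Γ)) (a : S) :
    H.lAct (u + v) a = H.lAct u a + H.lAct v a := by
  simp [lAct]

lemma tri_sum (x : S) (α : Γ) (m : Multiset S) :
    H.tri x α m.sum = (m.map (H.tri x α)).sum := by
  induction m using Multiset.induction_on with
  | empty => simp [H.zero_right]
  | cons b m ih => simp [H.add_right, ih]

lemma lAct_arg_add (u : Multiset (S × Γ)) (b c : S) :
    H.lAct u (b + c) = H.lAct u b + H.lAct u c := by
  simp only [lAct, H.add_right]
  rw [← Multiset.sum_map_add]

lemma lAct_arg_zero (u : Multiset (S × Γ)) : H.lAct u 0 = 0 := by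
  simp [lAct, H.zero_right]

lemma lAct_zero (a : S) : H.lAct 0 a = 0 := by simp [lAct]

lemma lAct_mul (u v : Multiset (S × Γ)) (a : S) :
    H.lAct (H.lMul u v) a = H.lAct u (H.lAct v a) := by
  unfold lAct lMul
  rw [Multiset.map_bind, Multiset.sum_bind]
  congr 1
  refine Multiset.map_congr rfl ?_
  intro p _
  rw [tri_sum, Multiset.map_map, Multiset.map_map]
  congr 1
  refine Multiset.map_congr rfl ?_
  intro q _
  simp [Function.comp, H.tri_assoc]

noncomputable instance : Add H.LOp :=
  ⟨Quotient.map₂ (· + ·) (fun {u u'} hu {v v'} hv a => by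
    rw [lAct_add, lAct_add, hu a, hv a])⟩

noncomputable instance : Zero H.LOp := ⟨Quotient.mk H.lSetoid 0⟩

noncomputable instance : Mul H.LOp :=
  ⟨Quotient.map₂ H.lMul (fun {u u'} hu {v v'} hv a => by
    rw [lAct_mul, lAct_mul, hv a, hu (H.lAct v' a)])⟩

/-- The left operator hemiring structure. -/
noncomputable instance : NonUnitalSemiring H.LOp where
  add := (· + ·)
  zero := 0
  mul := (· * ·)
  nsmul := nsmulRec
  nsmul_zero := fun _ => rfl
  nsmul_succ := fun _ _ => rfl
  add_assoc a b c := Quotient.inductionOn₃ a b c fun u v w =>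
    congrArg (Quotient.mk _) (add_assoc u v w)
  zero_add a := Quotient.inductionOn a fun u => congrArg (Quotient.mk _) (zero_add u)
  add_zero a := Quotient.inductionOn a fun u => congrArg (Quotient.mk _) (add_zero u)
  add_comm a b := Quotient.inductionOn₂ a b fun u v => congrArg (Quotient.mk _) (add_comm u v)
  left_distrib a b c := Quotient.inductionOn₃ a b c fun u v w => Quotient.sound fun s => by
    simp [lAct_mul, lAct_add, lAct_arg_add]
  right_distrib a b c := Quotient.inductionOn₃ a b c fun u v w => Quotient.sound fun s => by
    simp [lAct_mul, lAct_add]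
  zero_mul a := Quotient.inductionOn a fun u => Quotient.sound fun s => by
    simp [lAct_mul, lAct_zero]
  mul_zero a := Quotient.inductionOn a fun u => Quotient.sound fun s => by
    simp [lAct_mul, lAct_zero, lAct_arg_zero]
  mul_assoc a b c := Quotient.inductionOn₃ a b c fun u v w => Quotient.sound fun s => by
    simp [lAct_mul]

/-- The class of a formal sum in `L`. -/
def lMk (u : Multiset (S × Γ)) : H.LOp := Quotient.mk H.lSetoid u

lemma mk_add (u v : Multiset (S × Γ)) : H.lMk u + H.lMk v = H.lMk (u + v) := rfl

lemma mk_mul (u v : Multiset (S × Γ)) : H.lMk u * H.lMk v = H.lMk (H.lMul u v) := rfl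

/-- Action of an element of `L` on `S`. -/
def lActQ : H.LOp → S → S := Quotient.lift H.lAct (fun _ _ h => funext h)

end GammaHemiring
instance : Fact ((0:ℝ) ≤ 1) := ⟨zero_le_one⟩

/-- Characteristic function of a subset, valued in the unit interval. -/
noncomputable def fuzzyChar {X : Type} (A : Set X) (x : X) : unitInterval :=
  if x ∈ A then 1 else 0

/-- A fuzzy h-ideal of a hemiring. -/
def IsFuzzyHIdeal {T : Type} [NonUnitalSemiring T] (μ : T → unitInterval) : Prop :=
  (∀ x y, μ x ⊓ μ y ≤ μ (x + y)) ∧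
  (∀ x y, μ x ⊔ μ y ≤ μ (x * y)) ∧
  (∀ x a b z, x + a + z = b + z → μ a ⊓ μ b ≤ μ x)

namespace GammaHemiring

variable {S Γ : Type} [AddCommMonoid S] [AddCommMonoid Γ] (H : GammaHemiring S Γ)

/-- A fuzzy h-ideal of a `Γ`-hemiring. -/
def IsGFuzzyHIdeal (μ : S → unitInterval) : Prop :=
  (∀ x y, μ x ⊓ μ y ≤ μ (x + y)) ∧
  (∀ x γ y, μ x ⊔ μ y ≤ μ (H.tri x γ y)) ∧
  (∀ x a b z, x + a + z = b + z → μ a ⊓ μ b ≤ μ x)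

/-- For a fuzzy subset `μ` of `L`, the fuzzy subset `μ⁺` of `S`, `μ⁺(x) = inf_γ μ([x,γ])`. -/
noncomputable def plusMap (μ : H.LOp → unitInterval) (x : S) : unitInterval :=
  ⨅ γ : Γ, μ (H.lMk {(x, γ)})

/-- For a fuzzy subset `σ` of `S`, the fuzzy subset `σ⁺′` of `L`,
`σ⁺′(Σᵢ[xᵢ,αᵢ]) = inf_s σ(Σᵢ xᵢαᵢs)`. -/
noncomputable def plusPrime (σ : S → unitInterval) : H.LOp → unitInterval :=
  Quotient.lift (fun u => ⨅ s : S, σ (H.lAct u s))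
    (fun u v h => iInf_congr fun s => by rw [h s])

/-- A left unity of `S`: an element `Σᵢ[eᵢ,δᵢ]` of `L` acting as the identity. -/
def IsLeftUnity (E : Multiset (S × Γ)) : Prop := ∀ a : S, H.lAct E a = a

/-- A right unity of `S`: a formal sum `Σⱼ[γⱼ,fⱼ]` with `Σⱼ a γⱼ fⱼ = a` for all `a`. -/
def IsRightUnity (E : Multiset (Γ × S)) : Prop :=
  ∀ a : S, ((E.map fun p => H.tri a p.1 p.2).sum) = a

end GammaHemiring
/-- An expression `x + Σᵢ aᵢγᵢbᵢ + z = Σᵢ cᵢδᵢdᵢ + z` in a `Γ`-hemiring. -/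
structure GammaHemiring.GExpr {S Γ : Type} [AddCommMonoid S] [AddCommMonoid Γ]
    (H : GammaHemiring S Γ) (x : S) : Type where
  n : ℕ
  a : Fin (n + 1) → S
  g : Fin (n + 1) → Γ
  b : Fin (n + 1) → S
  c : Fin (n + 1) → S
  e : Fin (n + 1) → Γ
  d : Fin (n + 1) → S
  z : S
  eq : x + (∑ i, H.tri (a i) (g i) (b i)) + z = (∑ i, H.tri (c i) (e i) (d i)) + z

/-- The generalized h-product of fuzzy subsets of a `Γ`-hemiring. -/
noncomputable def GammaHemiring.hProdG {S Γ : Type} [AddCommMonoid S] [AddCommMonoid Γ]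
    (H : GammaHemiring S Γ) (μ ν : S → unitInterval) (x : S) : unitInterval :=
  ⨆ e : H.GExpr x, ⨅ i, (μ (e.a i) ⊓ μ (e.c i)) ⊓ (ν (e.b i) ⊓ ν (e.d i))

/-- An expression `x + Σᵢ aᵢbᵢ + z = Σᵢ cᵢdᵢ + z` in a hemiring. -/
structure HExpr (T : Type) [NonUnitalSemiring T] (x : T) : Type where
  n : ℕ
  a : Fin (n + 1) → T
  b : Fin (n + 1) → T
  c : Fin (n + 1) → T
  d : Fin (n + 1) → T
  z : T
  eq : x + (∑ i, a i * b i) + z = (∑ i, c i * d i) + z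

/-- The generalized h-product of fuzzy subsets of a hemiring. -/
noncomputable def hProdH {T : Type} [NonUnitalSemiring T] (μ ν : T → unitInterval)
    (x : T) : unitInterval :=
  ⨆ e : HExpr T x, ⨅ i, (μ (e.a i) ⊓ μ (e.c i)) ⊓ (ν (e.b i) ⊓ ν (e.d i))
/-- A fuzzy h-quasi-ideal of a `Γ`-hemiring, where `χ_S` is the constant function `1`. -/
def GammaHemiring.IsGFuzzyHQuasiIdeal {S Γ : Type} [AddCommMonoid S] [AddCommMonoid Γ]
    (H : GammaHemiring S Γ) (μ : S → unitInterval) : Prop :=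
  (∀ x y, μ x ⊓ μ y ≤ μ (x + y)) ∧
  (∀ x, H.hProdG μ (fun _ => 1) x ⊓ H.hProdG (fun _ => 1) μ x ≤ μ x) ∧
  (∀ x a b z, x + a + z = b + z → μ a ⊓ μ b ≤ μ x)

/-- A fuzzy h-quasi-ideal of a hemiring. -/
def IsFuzzyHQuasiIdeal {T : Type} [NonUnitalSemiring T] (μ : T → unitInterval) : Prop :=
  (∀ x y, μ x ⊓ μ y ≤ μ (x + y)) ∧
  (∀ x, hProdH μ (fun _ => 1) x ⊓ hProdH (fun _ => 1) μ x ≤ μ x) ∧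
  (∀ x a b z, x + a + z = b + z → μ a ⊓ μ b ≤ μ x)

/-! Evaluation at a point `s : S` is additive on `L`, satisfies `(XY)s = X(Ys)`, and
`μ⁺′(X) ≤ μ(Xs)`. So an h-expression `X + Σ AᵢBᵢ + Z = Σ CᵢDᵢ + Z` in `L` becomes
`Xs + Σ Aᵢ(Bᵢs) + Zs = Σ Cᵢ(Dᵢs) + Zs` in `S`, and each `Aᵢ(Bᵢs)` must be split into products
`x γ y` of `S`. When the weight sits on `Aᵢ`, the right unity `Σⱼ [γⱼ, fⱼ]` gives
`Aᵢ(Bᵢs) = Σⱼ (Aᵢ(Bᵢs)) γⱼ fⱼ` with `μ(Aᵢ(Bᵢs)) ≥ μ⁺′(Aᵢ)`; when it sits on `Bᵢ`, a representative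
`Σₖ [xₖ, αₖ]` of `Aᵢ` gives `Aᵢ(Bᵢs) = Σₖ xₖ αₖ (Bᵢs)` with `μ(Bᵢs) ≥ μ⁺′(Bᵢ)`. Hence the
h-products of `μ⁺′` at `X` are bounded by those of `μ` at `Xs`, for every `s`. -/

theorem List.getD_mem_or_eq {α : Type*} (L : List α) (n : ℕ) (d : α) :
    L.getD n d ∈ L ∨ L.getD n d = d := by
  rcases lt_or_ge n L.length with hn | hn
  · exact .inl (L.getD_eq_getElem d hn ▸ L.getElem_mem hn)
  · exact .inr (L.getD_eq_default d hn)

theorem List.sum_univ_fin_getD {α M : Type*} [AddCommMonoid M] (g : α → M) (L : List α)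
    {d : α} (hd : g d = 0) {m : ℕ} (hm : L.length ≤ m) :
    ∑ i : Fin m, g (L.getD i d) = (L.map g).sum := by
  induction L generalizing m with
  | nil => simp [hd]
  | cons a L ih =>
    obtain ⟨m, rfl⟩ : ∃ k, m = k + 1 := ⟨m - 1, by simp at hm; omega⟩
    simp only [Fin.sum_univ_succ, Fin.val_zero, List.getD_cons_zero, Fin.val_succ,
      List.getD_cons_succ, ih (Nat.le_of_succ_le_succ hm), List.map_cons, List.sum_cons]

namespace GammaHemiring

section Triples

variable {S Γ : Type}

def rightUnityTriples (E' : Multiset (Γ × S)) (a : S) : Multiset (S × Γ × S) :=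
  E'.map fun q => (a, q.1, q.2)

def actTriples (u : Multiset (S × Γ)) (t : S) : Multiset (S × Γ × S) :=
  u.map fun q => (q.1, q.2, t)

theorem exists_fst_eq_of_mem_sum_rightUnityTriples {ι : Type*} [Fintype ι]
    {E' : Multiset (Γ × S)} {a : ι → S} {p : S × Γ × S}
    (hp : p ∈ ∑ i, rightUnityTriples E' (a i)) : ∃ i, a i = p.1 := by
  obtain ⟨i, -, hi⟩ := Multiset.mem_sum.1 hp
  obtain ⟨q, -, rfl⟩ := Multiset.mem_map.1 hi
  exact ⟨i, rfl⟩

theorem exists_snd_snd_eq_of_mem_sum_actTriples {ι : Type*} [Fintype ι]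
    {u : ι → Multiset (S × Γ)} {t : ι → S} {p : S × Γ × S}
    (hp : p ∈ ∑ i, actTriples (u i) (t i)) : ∃ i, t i = p.2.2 := by
  obtain ⟨i, -, hi⟩ := Multiset.mem_sum.1 hp
  obtain ⟨q, -, rfl⟩ := Multiset.mem_map.1 hi
  exact ⟨i, rfl⟩

end Triples

variable {S Γ : Type} [AddCommMonoid S] [AddCommMonoid Γ] (H : GammaHemiring S Γ)

def evalTriple (p : S × Γ × S) : S := H.tri p.1 p.2.1 p.2.2

def sumTriples : Multiset (S × Γ × S) →+ S :=
  Multiset.sumAddMonoidHom.comp (Multiset.mapAddMonoidHom H.evalTriple)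

theorem sumTriples_apply (l : Multiset (S × Γ × S)) :
    H.sumTriples l = (l.map H.evalTriple).sum := rfl

/-- Both sides are padded to a common positive length with the triple `(x₀, 0, y₀)`, which
evaluates to `0`. -/
theorem le_hProdG_of_sumTriples {μ ν : S → unitInterval} {w z : S} {β : unitInterval}
    (l r : Multiset (S × Γ × S)) (heq : w + H.sumTriples l + z = H.sumTriples r + z)
    (x₀ y₀ : S) (h₀ : β ≤ μ x₀ ⊓ ν y₀)
    (hl : ∀ p ∈ l, β ≤ μ p.1 ⊓ ν p.2.2) (hr : ∀ p ∈ r, β ≤ μ p.1 ⊓ ν p.2.2) :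
    β ≤ H.hProdG μ ν w := by
  set n := max l.card r.card
  set d : S × Γ × S := (x₀, 0, y₀)
  have hd : H.evalTriple d = 0 := H.zero_mid x₀ y₀
  set f : Fin (n + 1) → S × Γ × S := fun i => l.toList.getD i d
  set g : Fin (n + 1) → S × Γ × S := fun i => r.toList.getD i d
  have hsum : ∀ (m : Multiset (S × Γ × S)), m.card ≤ n + 1 →
      ∑ i : Fin (n + 1), H.evalTriple (m.toList.getD i d) = H.sumTriples m := fun m hm => by
    rw [List.sum_univ_fin_getD _ _ hd (by simpa using hm), Multiset.sum_map_toList]; rfl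
  have hbound : ∀ m : Multiset (S × Γ × S), (∀ p ∈ m, β ≤ μ p.1 ⊓ ν p.2.2) →
      ∀ k : ℕ, β ≤ μ (m.toList.getD k d).1 ⊓ ν (m.toList.getD k d).2.2 := fun m hm k => by
    rcases m.toList.getD_mem_or_eq k d with h | h
    · exact hm _ (Multiset.mem_toList.1 h)
    · rw [h]; exact h₀
  let e : H.GExpr w :=
    ⟨n, fun i => (f i).1, fun i => (f i).2.1, fun i => (f i).2.2,
      fun i => (g i).1, fun i => (g i).2.1, fun i => (g i).2.2, z, by
        change w + ∑ i, H.evalTriple (f i) + z = ∑ i, H.evalTriple (g i) + z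
        rw [hsum l (by omega), hsum r (by omega)]
        exact heq⟩
  refine le_iSup_of_le e (le_iInf fun i => ?_)
  have hf := hbound l hl i
  have hg := hbound r hr i
  simp only [le_inf_iff] at hf hg ⊢
  exact ⟨⟨hf.1, hg.1⟩, hf.2, hg.2⟩

theorem sumTriples_rightUnityTriples {E' : Multiset (Γ × S)} (hE' : H.IsRightUnity E') (a : S) :
    H.sumTriples (rightUnityTriples E' a) = a := by
  rw [sumTriples_apply, rightUnityTriples, Multiset.map_map]
  exact hE' a

theorem sumTriples_actTriples (u : Multiset (S × Γ)) (t : S) :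
    H.sumTriples (actTriples u t) = H.lAct u t := by
  rw [sumTriples_apply, actTriples, Multiset.map_map]
  rfl

theorem lActQ_add (X Y : H.LOp) (s : S) : H.lActQ (X + Y) s = H.lActQ X s + H.lActQ Y s :=
  Quotient.inductionOn₂ X Y fun u v => H.lAct_add u v s

theorem lActQ_mul (X Y : H.LOp) (s : S) : H.lActQ (X * Y) s = H.lActQ X (H.lActQ Y s) :=
  Quotient.inductionOn₂ X Y fun u v => H.lAct_mul u v s

theorem lAct_out (X : H.LOp) (s : S) : H.lAct X.out s = H.lActQ X s := by
  conv_rhs => rw [← Quotient.out_eq X]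
  rfl

def lActQAddHom (s : S) : H.LOp →+ S where
  toFun X := H.lActQ X s
  map_zero' := H.lAct_zero s
  map_add' X Y := H.lActQ_add X Y s

theorem lActQAddHom_apply (s : S) (X : H.LOp) : H.lActQAddHom s X = H.lActQ X s := rfl

theorem lActQ_hExpr {X : H.LOp} (e : HExpr H.LOp X) (s : S) :
    H.lActQ X s + ∑ i, H.lActQ (e.a i) (H.lActQ (e.b i) s) + H.lActQ e.z s =
      ∑ i, H.lActQ (e.c i) (H.lActQ (e.d i) s) + H.lActQ e.z s := by
  have h := congrArg (H.lActQAddHom s) e.eq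
  simpa only [map_add, map_sum, lActQAddHom_apply, lActQ_mul] using h

theorem plusPrime_eq_iInf (μ : S → unitInterval) (X : H.LOp) :
    H.plusPrime μ X = ⨅ s, μ (H.lActQ X s) :=
  Quotient.inductionOn X fun _ => rfl

theorem plusPrime_le (μ : S → unitInterval) (X : H.LOp) (s : S) :
    H.plusPrime μ X ≤ μ (H.lActQ X s) :=
  (H.plusPrime_eq_iInf μ X).trans_le (iInf_le _ s)

theorem hProdH_plusPrime_one_le {E' : Multiset (Γ × S)} (hE' : H.IsRightUnity E')
    (μ : S → unitInterval) (X : H.LOp) (s : S) :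
    hProdH (H.plusPrime μ) (fun _ => 1) X ≤ H.hProdG μ (fun _ => 1) (H.lActQ X s) := by
  refine iSup_le fun e => ?_
  set β := ⨅ i, (H.plusPrime μ (e.a i) ⊓ H.plusPrime μ (e.c i)) ⊓ ((1 : unitInterval) ⊓ 1)
  set A := fun i => H.lActQ (e.a i) (H.lActQ (e.b i) s)
  set C := fun i => H.lActQ (e.c i) (H.lActQ (e.d i) s)
  have hA : ∀ i, β ≤ μ (A i) := fun i =>
    le_trans (iInf_le_of_le i (inf_le_left.trans inf_le_left)) (H.plusPrime_le μ _ _)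
  have hC : ∀ i, β ≤ μ (C i) := fun i =>
    le_trans (iInf_le_of_le i (inf_le_left.trans inf_le_right)) (H.plusPrime_le μ _ _)
  refine H.le_hProdG_of_sumTriples (z := H.lActQ e.z s) (∑ i, rightUnityTriples E' (A i))
    (∑ i, rightUnityTriples E' (C i)) ?_ (A 0) (A 0) (le_inf (hA 0) le_top) ?_ ?_
  · simpa only [map_sum, H.sumTriples_rightUnityTriples hE'] using H.lActQ_hExpr e s
  · intro p hp
    obtain ⟨i, hi⟩ := exists_fst_eq_of_mem_sum_rightUnityTriples hp
    exact le_inf (hi ▸ hA i) le_top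
  · intro p hp
    obtain ⟨i, hi⟩ := exists_fst_eq_of_mem_sum_rightUnityTriples hp
    exact le_inf (hi ▸ hC i) le_top

theorem hProdH_one_plusPrime_le (μ : S → unitInterval) (X : H.LOp) (s : S) :
    hProdH (fun _ => 1) (H.plusPrime μ) X ≤ H.hProdG (fun _ => 1) μ (H.lActQ X s) := by
  refine iSup_le fun e => ?_
  set β := ⨅ i, ((1 : unitInterval) ⊓ 1) ⊓ (H.plusPrime μ (e.b i) ⊓ H.plusPrime μ (e.d i))
  set t := fun i => H.lActQ (e.b i) s
  set t' := fun i => H.lActQ (e.d i) s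
  have ht : ∀ i, β ≤ μ (t i) := fun i =>
    le_trans (iInf_le_of_le i (inf_le_right.trans inf_le_left)) (H.plusPrime_le μ _ _)
  have ht' : ∀ i, β ≤ μ (t' i) := fun i =>
    le_trans (iInf_le_of_le i (inf_le_right.trans inf_le_right)) (H.plusPrime_le μ _ _)
  refine H.le_hProdG_of_sumTriples (z := H.lActQ e.z s) (∑ i, actTriples (e.a i).out (t i))
    (∑ i, actTriples (e.c i).out (t' i)) ?_ (t 0) (t 0) (le_inf le_top (ht 0)) ?_ ?_
  · simpa only [map_sum, sumTriples_actTriples, lAct_out] using H.lActQ_hExpr e s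
  · intro p hp
    obtain ⟨i, hi⟩ := exists_snd_snd_eq_of_mem_sum_actTriples hp
    exact le_inf le_top (hi ▸ ht i)
  · intro p hp
    obtain ⟨i, hi⟩ := exists_snd_snd_eq_of_mem_sum_actTriples hp
    exact le_inf le_top (hi ▸ ht' i)

variable {H} {μ : S → unitInterval}

theorem plusPrime_inf_le_add (hμ : ∀ x y, μ x ⊓ μ y ≤ μ (x + y)) (X Y : H.LOp) :
    H.plusPrime μ X ⊓ H.plusPrime μ Y ≤ H.plusPrime μ (X + Y) := by
  rw [H.plusPrime_eq_iInf μ (X + Y)]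
  refine le_iInf fun s => ?_
  rw [H.lActQ_add]
  exact (inf_le_inf (H.plusPrime_le μ X s) (H.plusPrime_le μ Y s)).trans (hμ _ _)

theorem plusPrime_inf_le_of_add_eq
    (hμ : ∀ x a b z, x + a + z = b + z → μ a ⊓ μ b ≤ μ x) {X A B Z : H.LOp}
    (h : X + A + Z = B + Z) :
    H.plusPrime μ A ⊓ H.plusPrime μ B ≤ H.plusPrime μ X := by
  rw [H.plusPrime_eq_iInf μ X]
  refine le_iInf fun s => ?_
  have hs := congrArg (H.lActQ · s) h
  simp only [lActQ_add] at hs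
  exact (inf_le_inf (H.plusPrime_le μ A s) (H.plusPrime_le μ B s)).trans (hμ _ _ _ _ hs)

theorem hProdH_inf_le_plusPrime {E' : Multiset (Γ × S)} (hE' : H.IsRightUnity E')
    (hμ : ∀ x, H.hProdG μ (fun _ => 1) x ⊓ H.hProdG (fun _ => 1) μ x ≤ μ x) (X : H.LOp) :
    hProdH (H.plusPrime μ) (fun _ => 1) X ⊓ hProdH (fun _ => 1) (H.plusPrime μ) X
      ≤ H.plusPrime μ X := by
  rw [H.plusPrime_eq_iInf μ X]
  refine le_iInf fun s => ?_
  exact (inf_le_inf (H.hProdH_plusPrime_one_le hE' μ X s)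
    (H.hProdH_one_plusPrime_le μ X s)).trans (hμ _)

end GammaHemiring

theorem plusPrime_quasiIdeal_general {S Γ : Type} [AddCommMonoid S] [AddCommMonoid Γ]
    (H : GammaHemiring S Γ)
    (E' : Multiset (Γ × S)) (hE' : H.IsRightUnity E')
    (μ : S → unitInterval) (hμ : H.IsGFuzzyHQuasiIdeal μ) :
    IsFuzzyHQuasiIdeal (H.plusPrime μ) :=
  ⟨GammaHemiring.plusPrime_inf_le_add hμ.1, GammaHemiring.hProdH_inf_le_plusPrime hE' hμ.2.1,
    fun _ _ _ _ => GammaHemiring.plusPrime_inf_le_of_add_eq hμ.2.2⟩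

/-- if `μ` is a fuzzy h-quasi-ideal of `S` (with left and right unities),
then `μ⁺′` is a fuzzy h-quasi-ideal of `L`. -/
theorem plusPrime_quasiIdeal {S Γ : Type} [AddCommMonoid S] [AddCommMonoid Γ]
    (H : GammaHemiring S Γ)
    (E : Multiset (S × Γ)) (hE : H.IsLeftUnity E)
    (E' : Multiset (Γ × S)) (hE' : H.IsRightUnity E')
    (μ : S → unitInterval) (hμ : H.IsGFuzzyHQuasiIdeal μ) :
    IsFuzzyHQuasiIdeal (H.plusPrime μ) :=
  plusPrime_quasiIdeal_general H E' hE' μ hμ
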